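/- arXiv:1705.09941 — 8 statements merged into one kernel-verified Lean document; each statement's English description precedes it below -/
import Mathlib

section
/- Let E be a subset of a metric space X and δ > 0. Then H^1(E) ≥ L_δ(E), where L_δ(E) is the supremum of Σ_i diam(E_i) over all finite disjoint families {E_i} of continua contained in E with diam(E_i) ≤ δ. -/
open MeasureTheory ENNReal

/-- `Lδ(E)`: supremum of `∑ diam Eᵢ` over finite pairwise disjoint families of
compact connected subsets of `E` with diameters at most `δ`. -/
noncomputable def Ldelta {X : Type*} [MetricSpace X] (E : Set X) (δ : ℝ≥0∞) : ℝ≥0∞ :=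
  ⨆ (n : ℕ) (F : Fin n → Set X) (_ : ∀ i, F i ⊆ E) (_ : ∀ i, IsCompact (F i))
    (_ : ∀ i, IsConnected (F i)) (_ : ∀ i, EMetric.diam (F i) ≤ δ)
    (_ : Pairwise (Function.onFun Disjoint F)),
    ∑ i, EMetric.diam (F i)

/-- Since `dist x` is `1`-Lipschitz, its image of `s` is an interval containing `[0, dist x y]`
for all `x y ∈ s`, and `μH[1]` is Lebesgue measure on `ℝ`. -/
lemma IsPreconnected.ediam_le_hausdorffMeasure_one {X : Type*} [MetricSpace X]
    [MeasurableSpace X] [BorelSpace X] {s : Set X} (hs : IsPreconnected s) :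
    Metric.ediam s ≤ μH[1] s := by
  refine Metric.ediam_le fun x hx y hy => ?_
  have hlip : LipschitzWith 1 (dist x) := LipschitzWith.dist_right x
  have hIcc : Set.Icc 0 (dist x y) ⊆ dist x '' s :=
    (hs.image _ hlip.continuous.continuousOn).Icc_subset ⟨x, hx, dist_self x⟩ ⟨y, hy, rfl⟩
  calc edist x y = volume (Set.Icc 0 (dist x y)) := by
        rw [Real.volume_Icc, edist_dist, sub_zero]
    _ = μH[1] (Set.Icc 0 (dist x y)) := by rw [hausdorffMeasure_real]
    _ ≤ μH[1] (dist x '' s) := measure_mono hIcc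
    _ ≤ μH[1] s := by simpa using hlip.hausdorffMeasure_image_le zero_le_one s

lemma sum_ediam_le_hausdorffMeasure_one {X ι : Type*} [MetricSpace X] [MeasurableSpace X]
    [BorelSpace X] [Fintype ι] {E : Set X} {F : ι → Set X} (hFE : ∀ i, F i ⊆ E)
    (hmeas : ∀ i, MeasurableSet (F i)) (hconn : ∀ i, IsPreconnected (F i))
    (hdisj : Pairwise (Function.onFun Disjoint F)) :
    ∑ i, Metric.ediam (F i) ≤ μH[1] E :=
  calc ∑ i, Metric.ediam (F i) ≤ ∑ i, μH[1] (F i) :=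
        Finset.sum_le_sum fun i _ => (hconn i).ediam_le_hausdorffMeasure_one
    _ = μH[1] (⋃ i, F i) := by
        rw [measure_iUnion hdisj hmeas, tsum_fintype]
    _ ≤ μH[1] E := measure_mono (Set.iUnion_subset hFE)

theorem stmt1_general {X : Type*} [MetricSpace X] [MeasurableSpace X] [BorelSpace X]
    (E : Set X) (δ : ℝ≥0∞) :
    Ldelta E δ ≤ μH[1] E :=
  iSup_le fun _ => iSup_le fun _ => iSup_le fun hFE => iSup_le fun hcompact =>
    iSup_le fun hconn => iSup_le fun _ => iSup_le fun hdisj =>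
      sum_ediam_le_hausdorffMeasure_one hFE (fun i => (hcompact i).isClosed.measurableSet)
        (fun i => (hconn i).isPreconnected) hdisj

theorem stmt1 {X : Type*} [MetricSpace X] [MeasurableSpace X] [BorelSpace X]
    (E : Set X) (δ : ℝ≥0∞) (hδ : 0 < δ) :
    Ldelta E δ ≤ μH[1] E :=
  stmt1_general E δ
end

section
/- Let U be a nonempty compact subset of a metric space X, and let F be a connected component of U. If F does not meet the topological boundary of U (in X), then F is a connected component of X. -/
/-!
In the compact Hausdorff space `U`, the component of `x` is the intersection of its clopen
neighbourhoods, so some clopen neighbourhood of `x` in `U` avoids `frontier U`. Lying in the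
interior of the closed set `U`, it is clopen in `X` as well, hence contains the component of `x`
in `X`.
-/

open Set

theorem exists_isClopen_mem_subset_of_connectedComponent_subset {Y : Type*} [TopologicalSpace Y]
    [T2Space Y] [CompactSpace Y] {y : Y} {V : Set Y} (hV : IsOpen V)
    (hyV : connectedComponent y ⊆ V) : ∃ s, IsClopen s ∧ y ∈ s ∧ s ⊆ V := by
  let N := { s : Set Y // IsClopen s ∧ y ∈ s }
  have : Nonempty N := ⟨⟨univ, isClopen_univ, mem_univ y⟩⟩
  have hdir : Directed (· ⊇ ·) fun s : N => (s : Set Y) := by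
    rintro ⟨s, hs, hys⟩ ⟨t, ht, hyt⟩
    exact ⟨⟨s ∩ t, hs.inter ht, hys, hyt⟩, inter_subset_left, inter_subset_right⟩
  obtain ⟨⟨s, hs, hys⟩, hsV⟩ := exists_subset_nhds_of_compactSpace hdir (fun s => s.2.1.1)
    fun z hz => hV.mem_nhds (hyV ((connectedComponent_eq_iInter_isClopen y).symm ▸ hz))
  exact ⟨s, hs, hys, hsV⟩

theorem IsClopen.image_val_of_subset_interior {X : Type*} [TopologicalSpace X] {U : Set X}
    (hU : IsClosed U) {s : Set U} (hs : IsClopen s) (hsU : s ⊆ Subtype.val ⁻¹' interior U) :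
    IsClopen (Subtype.val '' s) := by
  refine ⟨hU.isClosedEmbedding_subtypeVal.isClosed_iff_image_isClosed.1 hs.1, ?_⟩
  obtain ⟨c, hc, hsc⟩ := hs.2.image_val
  suffices Subtype.val '' s = c ∩ interior U from this ▸ hc.inter isOpen_interior
  refine Subset.antisymm (fun z hz => ⟨(hsc ▸ hz).1, ?_⟩) fun z hz => ?_
  · obtain ⟨z, hz, rfl⟩ := hz
    exact hsU hz
  · exact hsc ▸ ⟨hz.1, interior_subset hz.2⟩

theorem stmt2 {X : Type*} [MetricSpace X] (U : Set X) (hU : IsCompact U)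
    (x : X) (hx : x ∈ U)
    (hF : connectedComponentIn U x ∩ frontier U = ∅) :
    connectedComponentIn U x = connectedComponent x := by
  have : CompactSpace U := isCompact_iff_compactSpace.1 hU
  have hint : connectedComponentIn U x ⊆ interior U := by
    rw [← self_sdiff_frontier]
    exact subset_sdiff.2 ⟨connectedComponentIn_subset U x, disjoint_iff_inter_eq_empty.2 hF⟩
  have hcc : connectedComponent (⟨x, hx⟩ : U) ⊆ Subtype.val ⁻¹' interior U := by
    rw [← image_subset_iff, ← connectedComponentIn_eq_image hx]
    exact hint
  obtain ⟨s, hs, hxs, hsU⟩ := exists_isClopen_mem_subset_of_connectedComponent_subset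
    (isOpen_interior.preimage continuous_subtype_val) hcc
  have hK := hs.image_val_of_subset_interior hU.isClosed hsU
  have hccU : connectedComponent x ⊆ U :=
    (hK.connectedComponent_subset ⟨_, hxs, rfl⟩).trans (Subtype.coe_image_subset U s)
  refine Subset.antisymm ?_ ?_
  · exact isPreconnected_connectedComponentIn.subset_connectedComponent
      (mem_connectedComponentIn hx)
  · exact isPreconnected_connectedComponent.subset_connectedComponentIn
      mem_connectedComponent hccU
end

section
/- Let E be a connected subset of a metric space X, let B = B(x,r) be a closed ball centered at a point x ∈ E such that E ∩ B is compact and E \ B is nonempty, and let F be the connected component of E ∩ B containing x. Then H^1(F) ≥ r (and hence H^1(E ∩ B) ≥ r). -/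
open MeasureTheory Metric ENNReal Set

/-! If the component `F` of `x` in `K = E ∩ B(x, r)` missed the sphere, compactness of `K` would
give a clopen subset of `K` containing `x` and lying in the open ball. Such a set is closed in `X`
and relatively open in `E`, so the connected set `E` would be contained in it, although `E` leaves
`B(x, r)`. Hence `F` contains a point at distance `r` from `x`, and the 1-Lipschitz map
`dist · x` sends the connected set `F` onto a set containing `[0, r]`, so `H¹(F) ≥ r`. -/

theorem exists_isClopen_mem_disjoint_of_disjoint_connectedComponent {α : Type*}
    [TopologicalSpace α] [T2Space α] [CompactSpace α] {x : α} {S : Set α} (hS : IsClosed S)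
    (h : Disjoint (connectedComponent x) S) : ∃ C, IsClopen C ∧ x ∈ C ∧ Disjoint C S := by
  rw [connectedComponent_eq_iInter_isClopen, disjoint_comm, disjoint_iff_inter_eq_empty] at h
  obtain ⟨u, hu⟩ := hS.isCompact.elim_finite_subfamily_closed
    (fun s : {s : Set α // IsClopen s ∧ x ∈ s} => s.1) (fun s => s.2.1.1) h
  refine ⟨⋂ s ∈ u, s.1, isClopen_biInter_finset fun s _ => s.2.1,
    mem_iInter₂.2 fun s _ => s.2.2, ?_⟩
  rwa [disjoint_comm, disjoint_iff_inter_eq_empty]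

theorem IsPreconnected.subset_of_isClosed_of_inter_isOpen_eq {α : Type*} [TopologicalSpace α]
    {E D U : Set α} (hE : IsPreconnected E) (hD : IsClosed D) (hU : IsOpen U) (hEU : E ∩ U = D)
    (hne : D.Nonempty) : E ⊆ D := by
  have hcover : E ⊆ U ∪ Dᶜ := fun y hy => by
    by_cases hyD : y ∈ D
    · exact Or.inl (hEU ▸ hyD).2
    · exact Or.inr hyD
  have hsplit : E ∩ (U ∩ Dᶜ) = ∅ := by
    rw [← inter_assoc, hEU, inter_compl_self]
  rcases isPreconnected_iff_subset_of_disjoint.1 hE U Dᶜ hU hD.isOpen_compl hcover hsplit with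
    hEU' | hED
  · exact hEU ▸ subset_inter subset_rfl hEU'
  · obtain ⟨y, hy⟩ := hne
    exact absurd hy (hED (hEU ▸ hy).1)

theorem exists_mem_connectedComponentIn_inter_closedBall_dist_eq {X : Type*} [MetricSpace X]
    {E : Set X} (hE : IsPreconnected E) {x : X} (hx : x ∈ E) {r : ℝ} (hr : 0 ≤ r)
    (hcomp : IsCompact (E ∩ closedBall x r)) (hne : (E \ closedBall x r).Nonempty) :
    ∃ y ∈ connectedComponentIn (E ∩ closedBall x r) x, dist y x = r := by
  set K := E ∩ closedBall x r
  have hxK : x ∈ K := ⟨hx, mem_closedBall_self hr⟩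
  by_contra! hF
  have : CompactSpace K := isCompact_iff_compactSpace.mp hcomp
  obtain ⟨C, hC, hxC, hCS⟩ := exists_isClopen_mem_disjoint_of_disjoint_connectedComponent
    (x := ⟨x, hxK⟩) (isClosed_sphere.preimage continuous_subtype_val) <| by
      rw [disjoint_left]
      rintro y hy (hyS : dist (y : X) x = r)
      exact hF y (connectedComponentIn_eq_image hxK ▸ mem_image_of_mem _ hy) hyS
  obtain ⟨U, hU, hUC⟩ := isOpen_induced_iff.1 hC.isOpen
  set D : Set X := Subtype.val '' C
  have hDball : D ⊆ ball x r := by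
    rintro _ ⟨y, hy, rfl⟩
    exact lt_of_le_of_ne y.2.2 fun h => disjoint_left.1 hCS hy h
  have hED : E ∩ (U ∩ ball x r) = D := by
    ext y
    constructor
    · rintro ⟨hyE, hyU, hyb⟩
      exact ⟨⟨y, hyE, ball_subset_closedBall hyb⟩, hUC ▸ hyU, rfl⟩
    · rintro ⟨y, hy, rfl⟩
      exact ⟨y.2.1, show y ∈ Subtype.val ⁻¹' U from hUC ▸ hy, hDball ⟨y, hy, rfl⟩⟩
  have hEsub := hE.subset_of_isClosed_of_inter_isOpen_eq
    (hC.isClosed.isCompact.image continuous_subtype_val).isClosed (hU.inter isOpen_ball) hED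
    ⟨x, _, hxC, rfl⟩
  obtain ⟨z, hzE, hzB⟩ := hne
  exact hzB (ball_subset_closedBall (hDball (hEsub hzE)))

theorem IsPreconnected.ofReal_dist_le_hausdorffMeasure {X : Type*} [MetricSpace X]
    [MeasurableSpace X] [BorelSpace X] {F : Set X} (hF : IsPreconnected F) {x y : X}
    (hx : x ∈ F) (hy : y ∈ F) : ENNReal.ofReal (dist y x) ≤ μH[1] F := by
  have hlip : LipschitzWith 1 (dist · x) := LipschitzWith.dist_left x
  have hIcc : Icc 0 (dist y x) ⊆ (dist · x) '' F :=
    (hF.image _ hlip.continuous.continuousOn).Icc_subset ⟨x, hx, dist_self x⟩ ⟨y, hy, rfl⟩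
  calc ENNReal.ofReal (dist y x) = μH[1] (Icc 0 (dist y x)) := by
        rw [hausdorffMeasure_real, Real.volume_Icc, sub_zero]
    _ ≤ μH[1] ((dist · x) '' F) := measure_mono hIcc
    _ ≤ μH[1] F := by simpa using hlip.hausdorffMeasure_image_le zero_le_one F

theorem stmt3 {X : Type*} [MetricSpace X] [MeasurableSpace X] [BorelSpace X]
    (E : Set X) (hE : IsConnected E) (x : X) (hx : x ∈ E) (r : ℝ) (hr : 0 < r)
    (hcomp : IsCompact (E ∩ closedBall x r))
    (hne : (E \ closedBall x r).Nonempty) :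
    ENNReal.ofReal r ≤ μH[1] (connectedComponentIn (E ∩ closedBall x r) x) ∧
      ENNReal.ofReal r ≤ μH[1] (E ∩ closedBall x r) := by
  obtain ⟨y, hyF, hyr⟩ :=
    exists_mem_connectedComponentIn_inter_closedBall_dist_eq hE.isPreconnected hx hr.le hcomp hne
  have hxF : x ∈ connectedComponentIn (E ∩ closedBall x r) x :=
    mem_connectedComponentIn ⟨hx, mem_closedBall_self hr.le⟩
  have key : ENNReal.ofReal r ≤ μH[1] (connectedComponentIn (E ∩ closedBall x r) x) := by
    simpa only [hyr] using
      isPreconnected_connectedComponentIn.ofReal_dist_le_hausdorffMeasure hxF hyF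
  exact ⟨key, key.trans (measure_mono (connectedComponentIn_subset _ _))⟩
end

section
/- Let E be a connected and locally compact subset of a metric space X. Then for every δ > 0, the pre-measure H^1_δ(E) is at most L_δ(E). -/
open MeasureTheory ENNReal

/-- The pre-measure `H¹_δ(E)`: infimum of `∑ diam Eᵢ` over countable covers of `E`
by sets of diameter at most `δ`. -/
noncomputable def Hdelta {X : Type*} [MetricSpace X] (δ : ℝ≥0∞) (E : Set X) : ℝ≥0∞ :=
  ⨅ (F : ℕ → Set X) (_ : E ⊆ ⋃ n, F n) (_ : ∀ n, EMetric.diam (F n) ≤ δ),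
    ∑' n, EMetric.diam (F n)

/-!
Choose greedily disjoint continua `Kₙ ⊆ E` of diameter at most `δ/3`, each of diameter at least
half the supremum `sₙ` of the diameters still available off `K₀ ∪ ⋯ ∪ Kₙ₋₁`. Their total
diameter is at most `L_δ(E)`, so `∑ sₙ < ∞`. By boundary bumping in small compact balls, near a
point not covered by `K₀, …, K_{N-1}` and by the `sₙ`-neighbourhoods of the later `Kₙ` there
would still be a continuum larger than some `sₙ`; so these sets cover `E`, with total diameter
at most `L_δ(E) + 2 ∑_{n ≥ N} sₙ → L_δ(E)`.
-/

open Set Metric Filter Topology Function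
open scoped NNReal

section Bounds

variable {X Y : Type*} [MetricSpace X] [MetricSpace Y] {δ : ℝ≥0∞}

lemma Hdelta_le_tsum_ediam {E : Set X} (F : ℕ → Set X) (hE : E ⊆ ⋃ n, F n)
    (hF : ∀ n, ediam (F n) ≤ δ) : Hdelta δ E ≤ ∑' n, ediam (F n) :=
  iInf_le_of_le F <| iInf_le_of_le hE <| iInf_le _ hF

lemma Finset.sum_ediam_le_Ldelta {ι : Type*} {E : Set X} (s : Finset ι) {F : ι → Set X}
    (hF : ∀ i ∈ s, F i ⊆ E ∧ IsCompact (F i) ∧ IsPreconnected (F i) ∧ ediam (F i) ≤ δ)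
    (hdisj : (s : Set ι).PairwiseDisjoint F) :
    ∑ i ∈ s, ediam (F i) ≤ Ldelta E δ := by
  classical
  -- empty members contribute nothing, and the others are connected
  set t := s.filter fun i => (F i).Nonempty
  have hsum : ∑ i ∈ t, ediam (F i) = ∑ i ∈ s, ediam (F i) :=
    Finset.sum_filter_of_ne fun i _ h =>
      Set.nonempty_iff_ne_empty.2 fun he => h (by rw [he, ediam_empty])
  let e := t.equivFin
  let G : Fin t.card → Set X := fun j => F (e.symm j)
  have hmem (j) := Finset.mem_filter.1 (e.symm j).2
  have hG (j) : G j ⊆ E ∧ IsCompact (G j) ∧ IsPreconnected (G j) ∧ ediam (G j) ≤ δ :=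
    hF _ (hmem j).1
  have hGdisj : Pairwise (Disjoint on G) := fun j k hjk =>
    hdisj (hmem j).1 (hmem k).1 (Subtype.coe_injective.ne (e.symm.injective.ne hjk))
  calc ∑ i ∈ s, ediam (F i) = ∑ j, ediam (G j) := by
        rw [← hsum, ← Finset.sum_coe_sort t, ← e.symm.sum_comp]
    _ ≤ Ldelta E δ :=
        le_iSup_of_le t.card <| le_iSup_of_le G <| le_iSup_of_le (fun j => (hG j).1) <|
          le_iSup_of_le (fun j => (hG j).2.1) <|
          le_iSup_of_le (fun j => ⟨(hmem j).2, (hG j).2.2.1⟩) <|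
          le_iSup_of_le (fun j => (hG j).2.2.2) <| le_iSup_of_le hGdisj le_rfl

lemma Isometry.Hdelta_image_le {f : Y → X} (hf : Isometry f) (s : Set Y) :
    Hdelta δ (f '' s) ≤ Hdelta δ s :=
  le_iInf fun F => le_iInf fun hs => le_iInf fun hF =>
    (Hdelta_le_tsum_ediam (fun n => f '' F n) ((image_mono hs).trans image_iUnion.le)
      fun n => (hf.ediam_image _).trans_le (hF n)).trans_eq (tsum_congr fun _ => hf.ediam_image _)

lemma Isometry.Ldelta_le_image {f : Y → X} (hf : Isometry f) (s : Set Y) :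
    Ldelta s δ ≤ Ldelta (f '' s) δ := by
  refine iSup_le fun n => iSup_le fun F => iSup_le fun hs => iSup_le fun hc =>
    iSup_le fun hconn => iSup_le fun hd => iSup_le fun hdisj => ?_
  show ∑ i, ediam (F i) ≤ _
  simp only [← hf.ediam_image (F _)]
  refine Finset.univ.sum_ediam_le_Ldelta (fun i _ => ⟨image_mono (hs i),
    (hc i).image hf.continuous, (hconn i).isPreconnected.image _ hf.continuous.continuousOn,
    (hf.ediam_image _).trans_le (hd i)⟩) ?_
  exact (hdisj.mono fun i j h => (disjoint_image_iff hf.injective).2 h).set_pairwise _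

end Bounds

section BoundaryBumping

variable {α : Type*} [TopologicalSpace α]

lemma isOpen_image_val_of_disjoint_frontier {C : Set α} {U : Set C} (hU : IsOpen U)
    (hUC : Disjoint (Subtype.val '' U) (frontier C)) : IsOpen (Subtype.val '' U) := by
  obtain ⟨W, hW, rfl⟩ := isOpen_induced_iff.1 hU
  rw [Subtype.image_preimage_coe] at hUC ⊢
  rw [← hUC.sdiff_eq_left, inter_sdiff_right_comm, self_sdiff_frontier]
  exact isOpen_interior.inter hW

theorem IsCompact.exists_isPreconnected_inter_frontier_nonempty [T2Space α] [ConnectedSpace α]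
    {C : Set α} (hC : IsCompact C) (hCu : C ≠ univ) {x : α} (hx : x ∈ C) :
    ∃ Q ⊆ C, IsCompact Q ∧ IsPreconnected Q ∧ x ∈ Q ∧ (Q ∩ frontier C).Nonempty := by
  have : CompactSpace C := isCompact_iff_compactSpace.1 hC
  let x' : C := ⟨x, hx⟩
  refine ⟨(↑) '' connectedComponent x', Subtype.coe_image_subset C _,
    isClosed_connectedComponent.isCompact.image continuous_subtype_val,
    isPreconnected_connectedComponent.image _ continuous_subtype_val.continuousOn,
    ⟨x', mem_connectedComponent, rfl⟩, ?_⟩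
  by_contra hQ
  rw [not_nonempty_iff_eq_empty, ← image_inter_preimage, image_eq_empty,
    connectedComponent_eq_iInter_isClopen, inter_comm] at hQ
  -- components of a compact Hausdorff space are intersections of clopen sets, so by compactness
  -- a single clopen neighbourhood `U` of `x` already misses the frontier
  obtain ⟨u, hu⟩ := (isClosed_frontier.preimage continuous_subtype_val).isCompact
    |>.elim_finite_subfamily_closed _ (fun U => U.2.1.isClosed) hQ
  set U : Set C := ⋂ i ∈ u, (i : Set C)
  have hU : IsClopen U := isClopen_biInter_finset fun i _ => i.2.1
  have hUfr : Disjoint (Subtype.val '' U) (frontier C) := by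
    rw [disjoint_iff_inter_eq_empty, ← image_inter_preimage, inter_comm, hu, image_empty]
  have hUuniv := IsClopen.eq_univ (⟨(hU.isClosed.isCompact.image continuous_subtype_val).isClosed,
    isOpen_image_val_of_disjoint_frontier hU.isOpen hUfr⟩ : IsClopen (Subtype.val '' U))
    ⟨x, x', mem_iInter₂.2 fun i _ => i.2.2, rfl⟩
  exact hCu (univ_subset_iff.1 (hUuniv ▸ Subtype.coe_image_subset C U))

end BoundaryBumping

section Admissible

variable {X : Type*} [MetricSpace X] {δ : ℝ≥0∞} {A B K : Set X}

/-- The empty set is admissible (it is preconnected), so the greedy choice never gets stuck. -/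
def IsAdmissible (δ : ℝ≥0∞) (A K : Set X) : Prop :=
  IsCompact K ∧ IsPreconnected K ∧ ediam K ≤ δ ∧ Disjoint K A

noncomputable def admissibleSup (δ : ℝ≥0∞) (A : Set X) : ℝ≥0∞ :=
  ⨆ (K : Set X) (_ : IsAdmissible δ A K), ediam K

lemma ediam_le_admissibleSup (h : IsAdmissible δ A K) : ediam K ≤ admissibleSup δ A :=
  le_iSup₂ (f := fun K (_ : IsAdmissible δ A K) => ediam K) K h

lemma admissibleSup_le (δ : ℝ≥0∞) (A : Set X) : admissibleSup δ A ≤ δ :=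
  iSup₂_le fun _ h => h.2.2.1

lemma admissibleSup_anti (h : A ⊆ B) : admissibleSup δ B ≤ admissibleSup δ A :=
  iSup₂_le fun _ hK => ediam_le_admissibleSup ⟨hK.1, hK.2.1, hK.2.2.1, hK.2.2.2.mono_right h⟩

lemma exists_isAdmissible_le_two_mul_ediam (hδ : δ ≠ ⊤) (A : Set X) :
    ∃ K, IsAdmissible δ A K ∧ admissibleSup δ A ≤ 2 * ediam K := by
  rcases eq_or_ne (admissibleSup δ A) 0 with h0 | h0
  · exact ⟨∅, ⟨isCompact_empty, isPreconnected_empty, by simp, empty_disjoint _⟩, by simp [h0]⟩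
  obtain ⟨K, hK⟩ := lt_iSup_iff.1 <|
    ENNReal.half_lt_self h0 (ne_top_of_le_ne_top hδ (admissibleSup_le δ A))
  obtain ⟨hK, hlt⟩ := lt_iSup_iff.1 hK
  refine ⟨K, hK, ?_⟩
  rw [ENNReal.div_lt_iff (by simp) (by simp), mul_comm] at hlt
  exact hlt.le

/-- Boundary bumping in small compact balls around `x`. -/
lemma exists_pos_forall_lt_admissibleSup [ConnectedSpace X] [LocallyCompactSpace X] [Nontrivial X]
    (hδ : 0 < δ) (x : X) :
    ∃ ρ > 0, ∀ (A : Set X) (c : ℝ≥0∞), c < ρ → c < infEDist x A → c < admissibleSup δ A := by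
  obtain ⟨y, hy⟩ := exists_ne x
  obtain ⟨C, hC, hCx⟩ := exists_compact_mem_nhds x
  obtain ⟨r, hr, hrC⟩ := nhds_basis_closedEBall.mem_iff.1 hCx
  refine ⟨min r (min (edist y x) (δ / 2)), by simp [hr, hy, hδ.ne'], fun A c hcρ hcA => ?_⟩
  obtain ⟨t, hct, ht⟩ := exists_between (lt_min hcρ hcA)
  simp only [lt_min_iff] at ht
  obtain ⟨⟨htr, hty, htδ⟩, htA⟩ := ht
  have hCt : IsCompact (closedEBall x t) :=
    hC.of_isClosed_subset isClosed_closedEBall ((closedEBall_subset_closedEBall htr.le).trans hrC)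
  have hCu : closedEBall x t ≠ univ := fun h =>
    (mem_closedEBall.1 (h ▸ mem_univ y)).not_gt hty
  obtain ⟨Q, hQC, hQc, hQp, hxQ, p, hpQ, hp⟩ :=
    hCt.exists_isPreconnected_inter_frontier_nonempty hCu mem_closedEBall_self
  have htp : t ≤ edist x p := by
    rw [edist_comm]
    by_contra hpt
    exact hp.2 (interior_maximal eball_subset_closedEBall isOpen_eball (mem_eball.2 (not_le.1 hpt)))
  have hQ : IsAdmissible δ A Q := by
    refine ⟨hQc, hQp, (ediam_mono hQC).trans (ediam_closedEBall_le.trans ?_),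
      (disjoint_closedEBall_of_lt_infEDist htA).mono_left hQC⟩
    rw [mul_comm, ← ENNReal.le_div_iff_mul_le (by simp) (by simp)]
    exact htδ.le
  calc c < t := hct
    _ ≤ edist x p := htp
    _ ≤ ediam Q := edist_le_ediam_of_mem hxQ hpQ
    _ ≤ admissibleSup δ A := ediam_le_admissibleSup hQ

end Admissible

section Greedy

variable {α : Type*}

/-- The union of the first `n` pieces chosen by `g`; the `n`-th piece is `g (greedyUnion g n)`. -/
def greedyUnion (g : Set α → Set α) : ℕ → Set α
  | 0 => ∅
  | n + 1 => greedyUnion g n ∪ g (greedyUnion g n)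

lemma greedyUnion_eq_biUnion (g : Set α → Set α) (n : ℕ) :
    greedyUnion g n = ⋃ i ∈ Finset.range n, g (greedyUnion g i) := by
  induction n with
  | zero => simp [greedyUnion]
  | succ n ih => rw [greedyUnion, Finset.range_add_one, Finset.set_biUnion_insert, ih, union_comm]

lemma monotone_greedyUnion (g : Set α → Set α) : Monotone (greedyUnion g) :=
  monotone_nat_of_le_succ fun _ => subset_union_left

lemma pairwise_disjoint_greedy {g : Set α → Set α} (hg : ∀ A, Disjoint (g A) A) :
    Pairwise (Disjoint on fun n => g (greedyUnion g n)) := by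
  refine (pairwise_disjoint_on _).2 fun i j hij => ((hg _).mono_right ?_).symm
  rw [greedyUnion_eq_biUnion g j]
  exact subset_biUnion_of_mem (u := fun i => g (greedyUnion g i)) (Finset.mem_range.2 hij)

end Greedy

section Covering

variable {X : Type*} [MetricSpace X] [ConnectedSpace X] [LocallyCompactSpace X] {δ : ℝ≥0∞}

/-- A point missed by all the thickened pieces would leave room, near it, for an admissible piece
larger than the (vanishing) remaining supremum. -/
theorem univ_subset_iUnion_cthickening_greedy [Nontrivial X] (hδ : 0 < δ) (g : Set X → Set X)
    (hs : Tendsto (fun n => admissibleSup δ (greedyUnion g n)) atTop (𝓝 0)) {N : ℕ}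
    {r : ℕ → ℝ≥0} (hr : ∀ n ≥ N, admissibleSup δ (greedyUnion g n) ≤ r n) :
    univ ⊆ ⋃ n, cthickening (r n) (g (greedyUnion g n)) := by
  set s := fun n => admissibleSup δ (greedyUnion g n)
  intro x _
  by_contra hx
  simp only [mem_iUnion, not_exists, mem_cthickening_iff, not_le, ENNReal.ofReal_coe_nnreal] at hx
  set d := fun n => infEDist x (g (greedyUnion g n))
  obtain ⟨ρ, hρ, hρA⟩ := exists_pos_forall_lt_admissibleSup hδ x
  have hm : 0 < (Finset.range N).inf d :=
    (Finset.lt_inf_iff ENNReal.zero_lt_top).2 fun i _ => zero_le.trans_lt (hx i)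
  obtain ⟨n, hn, hnN⟩ :=
    ((hs.eventually (gt_mem_nhds (lt_min hm hρ))).and (eventually_ge_atTop N)).exists
  rw [lt_min_iff] at hn
  have hsd : ∀ i ∈ Finset.range n, s n < d i := fun i hi => by
    by_cases hiN : i < N
    · exact hn.1.trans_le (Finset.inf_le (Finset.mem_range.2 hiN))
    · calc s n ≤ s i :=
            admissibleSup_anti (monotone_greedyUnion g (Finset.mem_range.1 hi).le)
        _ ≤ r i := hr i (not_lt.1 hiN)
        _ < d i := hx i
  have hsA : s n < infEDist x (greedyUnion g n) := by
    refine ((Finset.lt_inf_iff (hn.2.trans_le le_top)).2 hsd).trans_le (le_infEDist.2 ?_)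
    intro y hy
    rw [greedyUnion_eq_biUnion, mem_iUnion₂] at hy
    obtain ⟨i, hi, hy⟩ := hy
    exact (Finset.inf_le hi).trans (infEDist_le_edist_of_mem hy)
  exact (hρA _ _ hn.2 hsA).false

/-- Cover by the greedy pieces, thickened from index `N` on by the remaining suprema. -/
lemma Hdelta_le_tsum_add_tail [Nontrivial X] {δ' : ℝ≥0∞} (hδ' : 0 < δ') (hδ'top : δ' ≠ ⊤)
    (hδδ' : 3 * δ' ≤ δ) {g : Set X → Set X} (hg : ∀ A, IsAdmissible δ' A (g A))
    (hs : Tendsto (fun n => admissibleSup δ' (greedyUnion g n)) atTop (𝓝 0)) (N : ℕ) :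
    Hdelta δ (univ : Set X) ≤ ∑' n, ediam (g (greedyUnion g n)) +
      2 * ∑' n, admissibleSup δ' (greedyUnion g (n + N)) := by
  set s := fun n => admissibleSup δ' (greedyUnion g n)
  set r : ℕ → ℝ≥0 := fun n => if n < N then 0 else (s n).toNNReal
  have hs_top (n) : s n ≠ ⊤ := ne_top_of_le_ne_top hδ'top (admissibleSup_le _ _)
  have hr (n) (hn : N ≤ n) : (r n : ℝ≥0∞) = s n := by
    simp [r, not_lt.2 hn, ENNReal.coe_toNNReal (hs_top n)]
  have hrs (n) : (r n : ℝ≥0∞) ≤ s n := by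
    by_cases hn : n < N
    · simp [r, hn]
    · exact (hr n (not_lt.1 hn)).le
  have hcov := univ_subset_iUnion_cthickening_greedy hδ' g hs fun n hn => (hr n hn).ge
  refine (Hdelta_le_tsum_ediam _ hcov fun n => (ediam_cthickening_le _).trans ?_).trans ?_
  · calc ediam (g (greedyUnion g n)) + 2 * r n ≤ δ' + 2 * δ' :=
          by gcongr; exacts [(hg _).2.2.1, (hrs n).trans (admissibleSup_le _ _)]
      _ = 3 * δ' := by ring
      _ ≤ δ := hδδ'
  · have htail : ∑' n, (r n : ℝ≥0∞) = ∑' n, s (n + N) := by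
      rw [← ENNReal.summable.sum_add_tsum_nat_add' (k := N), Finset.sum_eq_zero
        fun n hn => by simp [r, Finset.mem_range.1 hn], zero_add]
      exact tsum_congr fun n => hr _ (Nat.le_add_left N n)
    calc ∑' n, ediam (cthickening (r n) (g (greedyUnion g n)))
        ≤ ∑' n, (ediam (g (greedyUnion g n)) + 2 * r n) :=
          ENNReal.tsum_le_tsum fun n => ediam_cthickening_le _
      _ = _ := by rw [ENNReal.tsum_add, ENNReal.tsum_mul_left, htail]

end Covering

theorem Hdelta_univ_le_Ldelta_univ {X : Type*} [MetricSpace X] [ConnectedSpace X]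
    [LocallyCompactSpace X] {δ : ℝ≥0∞} (hδ : 0 < δ) :
    Hdelta δ (univ : Set X) ≤ Ldelta (univ : Set X) δ := by
  rcases subsingleton_or_nontrivial X with hX | hX
  · refine (Hdelta_le_tsum_ediam (fun _ => univ) (subset_iUnion _ 0) fun _ => ?_).trans ?_ <;>
      simp [ediam_subsingleton subsingleton_of_subsingleton]
  set L := Ldelta (univ : Set X) δ
  rcases eq_top_or_lt_top L with hL | hL
  · exact hL ▸ le_top
  obtain ⟨δ', hδ', hδ'top, hδδ'⟩ : ∃ δ', 0 < δ' ∧ δ' ≠ ⊤ ∧ 3 * δ' ≤ δ :=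
    ⟨min δ 1 / 3, by simp [hδ.ne'], by simp [ENNReal.div_eq_top],
      by rw [ENNReal.mul_div_cancel (by simp) (by simp)]; exact min_le_left _ _⟩
  choose g hg hsg using exists_isAdmissible_le_two_mul_ediam (X := X) hδ'top
  set K := fun n => g (greedyUnion g n)
  set s := fun n => admissibleSup δ' (greedyUnion g n)
  have hKL : ∑' n, ediam (K n) ≤ L := ENNReal.tsum_le_of_sum_range_le fun n =>
    (Finset.range n).sum_ediam_le_Ldelta (fun i _ => ⟨subset_univ _, (hg _).1, (hg _).2.1,
      (hg _).2.2.1.trans (le_mul_of_one_le_left' (by norm_num) |>.trans hδδ')⟩)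
      ((pairwise_disjoint_greedy fun A => (hg A).2.2.2).set_pairwise _)
  have hsL : ∑' n, s n ≠ ⊤ := by
    refine ne_top_of_le_ne_top (ENNReal.mul_ne_top (by simp : (2 : ℝ≥0∞) ≠ ⊤) hL.ne) ?_
    calc ∑' n, s n ≤ ∑' n, 2 * ediam (K n) := ENNReal.tsum_le_tsum fun n => hsg _
      _ = 2 * ∑' n, ediam (K n) := ENNReal.tsum_mul_left
      _ ≤ 2 * L := by gcongr
  have hbound (N : ℕ) : Hdelta δ (univ : Set X) ≤ L + 2 * ∑' n, s (n + N) :=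
    (Hdelta_le_tsum_add_tail hδ' hδ'top hδδ' hg (ENNReal.tendsto_atTop_zero_of_tsum_ne_top hsL)
      N).trans (by gcongr)
  have htail : Tendsto (fun N => L + 2 * ∑' n, s (n + N)) atTop (𝓝 L) := by
    simpa using (ENNReal.Tendsto.const_mul (ENNReal.tendsto_sum_nat_add s hsL)
      (Or.inr (by simp))).const_add L
  exact ge_of_tendsto' htail hbound

theorem stmt4 {X : Type*} [MetricSpace X] (E : Set X) (hE : IsConnected E)
    (hloc : LocallyCompactSpace E) (δ : ℝ≥0∞) (hδ : 0 < δ) :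
    Hdelta δ E ≤ Ldelta E δ := by
  have : ConnectedSpace E := Subtype.connectedSpace hE
  calc Hdelta δ E = Hdelta δ (Subtype.val '' (univ : Set E)) := by rw [Subtype.coe_image_univ]
    _ ≤ Hdelta δ (univ : Set E) := isometry_subtype_coe.Hdelta_image_le _
    _ ≤ Ldelta (univ : Set E) δ := Hdelta_univ_le_Ldelta_univ hδ
    _ ≤ Ldelta (Subtype.val '' (univ : Set E)) δ := isometry_subtype_coe.Ldelta_le_image _
    _ = Ldelta E δ := by rw [Subtype.coe_image_univ]
end

section
/- Let F be a continuum in a metric space X, let {E_i} be a countable family of connected subsets of X, and let E' be the union of all E_i. Then H^1(F \ E') + Σ_i diam(E_i) ≥ diam(F). -/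
/-!
Project `F` to `ℝ` by the `1`-Lipschitz map `z ↦ dist x z`. Since `F` is connected, its image
contains `[0, dist x y]` for all `x y ∈ F`. Lipschitz maps do not increase `μH[1]`, and the image of
each `E i` is a set of length at most `diam (E i)`, so covering the image of `F` by the images of
`F \ ⋃ i, E i` and of the `E i` gives the bound.
-/

open MeasureTheory ENNReal

section LipschitzToReal

variable {X : Type*} [EMetricSpace X] {f : X → ℝ}

theorem LipschitzWith.volume_image_le_hausdorffMeasure [MeasurableSpace X] [BorelSpace X]
    (hf : LipschitzWith 1 f) (s : Set X) : volume (f '' s) ≤ μH[1] s := by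
  rw [← hausdorffMeasure_real]
  simpa using hf.hausdorffMeasure_image_le zero_le_one s

theorem LipschitzWith.volume_image_le_ediam (hf : LipschitzWith 1 f) (s : Set X) :
    volume (f '' s) ≤ Metric.ediam s :=
  (Real.volume_le_diam _).trans (by simpa using hf.ediam_image_le s)

theorem LipschitzWith.volume_image_le_hausdorffMeasure_diff_add_tsum_ediam
    [MeasurableSpace X] [BorelSpace X] {ι : Type*} [Countable ι]
    (hf : LipschitzWith 1 f) (s : Set X) (E : ι → Set X) :
    volume (f '' s) ≤ μH[1] (s \ ⋃ i, E i) + ∑' i, Metric.ediam (E i) := by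
  have hcover : f '' s ⊆ f '' (s \ ⋃ i, E i) ∪ ⋃ i, f '' E i := by
    rw [← Set.image_iUnion, ← Set.image_union]
    exact Set.image_mono fun z hz => by by_cases h : z ∈ ⋃ i, E i <;> simp [hz, h]
  calc volume (f '' s)
      ≤ volume (f '' (s \ ⋃ i, E i)) + ∑' i, volume (f '' E i) :=
        (measure_mono hcover).trans
          ((measure_union_le _ _).trans (add_le_add le_rfl (measure_iUnion_le _)))
    _ ≤ μH[1] (s \ ⋃ i, E i) + ∑' i, Metric.ediam (E i) :=
        add_le_add (hf.volume_image_le_hausdorffMeasure _)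
          (ENNReal.tsum_le_tsum fun i => hf.volume_image_le_ediam _)

end LipschitzToReal

theorem IsPreconnected.edist_le_volume_image_dist {X : Type*} [PseudoMetricSpace X] {F : Set X}
    (hF : IsPreconnected F) {x y : X} (hx : x ∈ F) (hy : y ∈ F) :
    edist x y ≤ volume ((dist x ·) '' F) := by
  have hIcc : Set.Icc 0 (dist x y) ⊆ (dist x ·) '' F :=
    (hF.image _ (continuous_const.dist continuous_id).continuousOn).ordConnected.out
      ⟨x, hx, dist_self x⟩ ⟨y, hy, rfl⟩
  calc edist x y = volume (Set.Icc 0 (dist x y)) := by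
        rw [Real.volume_Icc, edist_dist, sub_zero]
    _ ≤ volume ((dist x ·) '' F) := measure_mono hIcc

theorem stmt6_general {X : Type*} [MetricSpace X] [MeasurableSpace X] [BorelSpace X]
    (F : Set X) (hFconn : IsConnected F)
    (E : ℕ → Set X) :
    EMetric.diam F ≤ μH[1] (F \ ⋃ i, E i) + ∑' i, EMetric.diam (E i) :=
  Metric.ediam_le fun x hx y hy =>
    (hFconn.isPreconnected.edist_le_volume_image_dist hx hy).trans
      ((LipschitzWith.dist_right x).volume_image_le_hausdorffMeasure_diff_add_tsum_ediam F E)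

theorem stmt6 {X : Type*} [MetricSpace X] [MeasurableSpace X] [BorelSpace X]
    (F : Set X) (hFc : IsCompact F) (hFconn : IsConnected F)
    (E : ℕ → Set X) (hE : ∀ i, IsPreconnected (E i)) :
    EMetric.diam F ≤ μH[1] (F \ ⋃ i, E i) + ∑' i, EMetric.diam (E i) :=
  stmt6_general F hFconn E
end

section
/- Let K be a compact subset of a metric space X with at most m connected components, let K' be a δ-connected subset of K, and let U be a closed set containing K' with dist(K', ∂U) ≥ r for some r > 0. Then H^1(K ∩ U) ≥ (1 − δ/r)·diam(K') − m·δ. -/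
open MeasureTheory ENNReal

/-- A set `A` is `δ`-connected if any two of its points are joined by a `δ`-chain in `A`. -/
def DeltaConnected {X : Type*} [MetricSpace X] (δ : ℝ) (A : Set X) : Prop :=
  ∀ x ∈ A, ∀ y ∈ A, ∃ (n : ℕ) (c : Fin (n + 1) → X),
    (∀ i, c i ∈ A) ∧ c 0 = x ∧ c (Fin.last n) = y ∧
      ∀ i : Fin n, dist (c i.castSucc) (c i.succ) ≤ δ

/-!
Join two points `x, y` of `K'` by a `δ`-chain and consider the components of `K ∩ U` through
the chain points. Under the `1`-Lipschitz map `dist x`, each such component `Q` covers an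
interval of length `ℓ Q ≤ H¹(Q)`, and these intervals, widened by `δ`, cover `[0, dist x y]`.
In a compact Hausdorff space components are intersections of clopen sets, so a component of
`K ∩ U` that is not a whole component of `K` must reach `∂U`; it then joins a chain point to
`∂U` and `H¹(Q) ≥ r`. This gives `(1 - δ/r) (ℓ Q + δ) ≤ H¹(Q)` for every component except the
at most `m` components of `K`, where the bound is `H¹(Q) + δ`. Summing over the disjoint
components, `(1 - δ/r) dist x y ≤ H¹(K ∩ U) + m δ`.
-/

open Set

section Topology

variable {X : Type*} [TopologicalSpace X]

theorem IsClosed.connectedComponentIn {F : Set X} (hF : IsClosed F) (x : X) :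
    IsClosed (connectedComponentIn F x) := by
  by_cases hx : x ∈ F
  · refine isClosed_of_closure_subset <|
      isPreconnected_connectedComponentIn.closure.subset_connectedComponentIn
        (subset_closure (mem_connectedComponentIn hx)) ?_
    exact closure_minimal (connectedComponentIn_subset F x) hF
  · rw [connectedComponentIn_eq_empty hx]
    exact isClosed_empty

theorem pairwiseDisjoint_range_connectedComponentIn (F : Set X) :
    (range (connectedComponentIn F)).PairwiseDisjoint id := by
  rintro _ ⟨x, rfl⟩ _ ⟨y, rfl⟩ hxy
  refine disjoint_left.2 fun z hzx hzy => hxy ?_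
  rw [connectedComponentIn_eq hzx, connectedComponentIn_eq hzy]

theorem exists_isClopen_connectedComponent_subset_disjoint [T2Space X] [CompactSpace X]
    {F : Set X} (hF : IsClosed F) {x : X} (hd : Disjoint (connectedComponent x) F) :
    ∃ V : Set X, IsClopen V ∧ connectedComponent x ⊆ V ∧ Disjoint V F := by
  have h : F ∩ ⋂ Z : {Z : Set X // IsClopen Z ∧ x ∈ Z}, (Z : Set X) = ∅ := by
    rw [← connectedComponent_eq_iInter_isClopen]
    exact hd.symm.inter_eq
  obtain ⟨s, hs⟩ := hF.isCompact.elim_finite_subfamily_closed _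
    (fun Z : {Z : Set X // IsClopen Z ∧ x ∈ Z} => Z.2.1.1) h
  refine ⟨⋂ Z ∈ s, (Z : Set X), isClopen_biInter_finset fun Z _ => Z.2.1,
    subset_iInter₂ fun Z _ => Z.2.1.connectedComponent_subset Z.2.2, ?_⟩
  rw [disjoint_iff_inter_eq_empty, inter_comm]
  exact hs

theorem IsCompact.exists_isClosed_connectedComponentIn_subset_disjoint [T2Space X]
    {T F : Set X} (hT : IsCompact T) (hF : IsClosed F) {t : X} (ht : t ∈ T)
    (hd : Disjoint (connectedComponentIn T t) F) :
    ∃ O : Set X, IsOpen O ∧ IsClosed (O ∩ T) ∧ connectedComponentIn T t ⊆ O ∩ T ∧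
      Disjoint (O ∩ T) F := by
  have : CompactSpace T := isCompact_iff_compactSpace.mp hT
  rw [connectedComponentIn_eq_image ht] at hd ⊢
  obtain ⟨V, hV, hsub, hVF⟩ := exists_isClopen_connectedComponent_subset_disjoint
    (hF.preimage continuous_subtype_val) (x := ⟨t, ht⟩)
    (disjoint_left.2 fun z hz hzF => disjoint_left.1 hd ⟨z, hz, rfl⟩ hzF)
  obtain ⟨O, hO, rfl⟩ := isOpen_induced_iff.mp hV.isOpen
  have hOT : Subtype.val '' (Subtype.val ⁻¹' O : Set T) = O ∩ T := by
    rw [Subtype.image_preimage_coe, inter_comm]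
  refine ⟨O, hO, hOT ▸ (hV.isClosed.isCompact.image continuous_subtype_val).isClosed,
    hOT ▸ image_mono hsub, ?_⟩
  rw [← hOT, disjoint_left]
  rintro _ ⟨z, hz, rfl⟩ hzF
  exact disjoint_left.1 hVF hz hzF

theorem IsCompact.connectedComponentIn_inter_eq_or_inter_frontier_nonempty [T2Space X]
    {K U : Set X} (hK : IsCompact K) (hU : IsClosed U) {t : X} (ht : t ∈ K ∩ U) :
    connectedComponentIn (K ∩ U) t = connectedComponentIn K t ∨
      (connectedComponentIn (K ∩ U) t ∩ frontier U).Nonempty := by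
  refine or_iff_not_imp_right.2 fun hQ => ?_
  obtain ⟨O, hO, hV, hQV, hVF⟩ :=
    (hK.inter_right hU).exists_isClosed_connectedComponentIn_subset_disjoint isClosed_frontier ht
      (disjoint_iff_inter_eq_empty.2 (not_nonempty_iff_eq_empty.1 hQ))
  have hVint : O ∩ (K ∩ U) ⊆ interior U := fun z hz =>
    by_contra fun h => disjoint_left.1 hVF hz ⟨subset_closure hz.2.2, h⟩
  have htV : t ∈ O ∩ (K ∩ U) := hQV (mem_connectedComponentIn ht)
  refine (connectedComponentIn_mono t inter_subset_left).antisymm <|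
    isPreconnected_connectedComponentIn.subset_connectedComponentIn
      (mem_connectedComponentIn ht.1) ?_
  -- `O ∩ (K ∩ U)` is clopen in `K`: closed, and equal to `K ∩ (O ∩ interior U)`.
  have hcover : connectedComponentIn K t ⊆ (O ∩ interior U) ∪ (O ∩ (K ∩ U))ᶜ := fun z _ =>
    (em (z ∈ O ∩ (K ∩ U))).imp (fun hz => ⟨hz.1, hVint hz⟩) id
  have hdisj : connectedComponentIn K t ∩ ((O ∩ interior U) ∩ (O ∩ (K ∩ U))ᶜ) = ∅ :=
    eq_empty_of_forall_notMem fun z ⟨hzK, ⟨hzO, hzU⟩, hzV⟩ =>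
      hzV ⟨hzO, connectedComponentIn_subset K t hzK, interior_subset hzU⟩
  rcases isPreconnected_iff_subset_of_disjoint.1 isPreconnected_connectedComponentIn _ _
      (hO.inter isOpen_interior) hV.isOpen_compl hcover hdisj with h | h
  · exact fun z hz => ⟨connectedComponentIn_subset K t hz, interior_subset (h hz).2⟩
  · exact absurd htV (h (mem_connectedComponentIn ht.1))

end Topology

section HausdorffMeasure

variable {X : Type*} [EMetricSpace X] [MeasurableSpace X] [BorelSpace X]

theorem LipschitzWith.volume_le_hausdorffMeasure {f : X → ℝ} (hf : LipschitzWith 1 f)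
    {A : Set X} {s : Set ℝ} (hs : s ⊆ f '' A) : volume s ≤ μH[1] A :=
  calc volume s ≤ volume (f '' A) := measure_mono hs
    _ = μH[1] (f '' A) := by rw [hausdorffMeasure_real]
    _ ≤ μH[1] A := by simpa using hf.hausdorffMeasure_image_le zero_le_one A

theorem IsPreconnected.ofReal_sSup_sub_sInf_le_hausdorffMeasure {f : X → ℝ}
    (hf : LipschitzWith 1 f) {A : Set X} (hA : IsPreconnected A)
    (hb : Bornology.IsBounded (f '' A)) :
    ENNReal.ofReal (sSup (f '' A) - sInf (f '' A)) ≤ μH[1] A := by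
  rcases A.eq_empty_or_nonempty with rfl | hne
  · simp
  rw [← Real.volume_Ioo]
  exact hf.volume_le_hausdorffMeasure <| IsConnected.Ioo_csInf_csSup_subset
    ⟨hne.image f, hA.image f hf.continuous.continuousOn⟩ hb.bddBelow hb.bddAbove

end HausdorffMeasure

theorem IsPreconnected.ofReal_dist_le_hausdorffMeasure_s9 {X : Type*} [MetricSpace X]
    [MeasurableSpace X] [BorelSpace X] {A : Set X} (hA : IsPreconnected A) {p q : X}
    (hp : p ∈ A) (hq : q ∈ A) : ENNReal.ofReal (dist p q) ≤ μH[1] A := by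
  have hf := LipschitzWith.dist_right p
  rw [← sub_zero (dist p q), ← Real.volume_Icc]
  exact hf.volume_le_hausdorffMeasure <|
    (hA.image _ hf.continuous.continuousOn).Icc_subset ⟨p, hp, dist_self p⟩ ⟨q, hq, rfl⟩

theorem sum_measure_image_connectedComponentIn_le {α ι : Type*} [TopologicalSpace α]
    [MeasurableSpace α] [OpensMeasurableSpace α] [DecidableEq (Set α)] (μ : Measure α)
    {T : Set α} (hT : IsClosed T) (s : Finset ι) (c : ι → α) :
    ∑ A ∈ s.image (fun i => connectedComponentIn T (c i)), μ A ≤ μ T := by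
  set S := s.image (fun i => connectedComponentIn T (c i))
  have hsub : ∀ A ∈ S, A ⊆ T ∧ MeasurableSet A :=
    Finset.forall_mem_image.2 fun i _ =>
      ⟨connectedComponentIn_subset T (c i), (hT.connectedComponentIn (c i)).measurableSet⟩
  have hdisj : (S : Set (Set α)).PairwiseDisjoint id :=
    (pairwiseDisjoint_range_connectedComponentIn T).subset <| by
      rintro _ hA
      obtain ⟨i, -, rfl⟩ := Finset.mem_image.1 hA
      exact mem_range_self _
  calc ∑ A ∈ S, μ A = μ (⋃ A ∈ S, A) :=
        (measure_biUnion_finset hdisj fun A hA => (hsub A hA).2).symm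
    _ ≤ μ T := measure_mono (iUnion₂_subset fun A hA => (hsub A hA).1)

theorem Icc_subset_iUnion_Icc_sub_of_le_add {δ : ℝ} (hδ : 0 ≤ δ) :
    ∀ {n : ℕ} {t : Fin (n + 1) → ℝ}, (∀ i : Fin n, t i.succ ≤ t i.castSucc + δ) →
      Icc (t 0) (t (Fin.last n)) ⊆ ⋃ i, Icc (t i - δ) (t i)
  | 0, t, _ => fun s hs => mem_iUnion.2 ⟨0, by linarith [hs.1], hs.2⟩
  | n + 1, t, h => fun s hs => by
    by_cases hs' : s ≤ t (Fin.last n).castSucc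
    · obtain ⟨i, hi⟩ := mem_iUnion.1 <| Icc_subset_iUnion_Icc_sub_of_le_add hδ
        (t := t ∘ Fin.castSucc) (fun i => h i.castSucc) ⟨hs.1, hs'⟩
      exact mem_iUnion.2 ⟨i.castSucc, hi⟩
    · have hlast := h (Fin.last n)
      rw [Fin.succ_last] at hlast
      exact mem_iUnion.2 ⟨Fin.last _, by linarith, hs.2⟩

theorem sub_le_sum_sSup_sub_sInf_add {α : Type*} [DecidableEq (Set α)] {f : α → ℝ} {δ : ℝ}
    (hδ : 0 ≤ δ) {n : ℕ} {c : Fin (n + 1) → α} {Q : Fin (n + 1) → Set α}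
    (hstep : ∀ i : Fin n, f (c i.succ) ≤ f (c i.castSucc) + δ) (hc : ∀ i, c i ∈ Q i)
    (hQ : ∀ i, Bornology.IsBounded (f '' Q i)) :
    f (c (Fin.last n)) - f (c 0) ≤
      ∑ A ∈ Finset.univ.image Q, (sSup (f '' A) - sInf (f '' A) + δ) := by
  have hInf i : sInf (f '' Q i) ≤ f (c i) := csInf_le (hQ i).bddBelow (mem_image_of_mem f (hc i))
  have hSup i : f (c i) ≤ sSup (f '' Q i) := le_csSup (hQ i).bddAbove (mem_image_of_mem f (hc i))
  have hnonneg : ∀ A ∈ Finset.univ.image Q, 0 ≤ sSup (f '' A) - sInf (f '' A) + δ :=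
    Finset.forall_mem_image.2 fun i _ => by linarith [hInf i, hSup i]
  have hcover : Icc (f (c 0)) (f (c (Fin.last n))) ⊆
      ⋃ A ∈ Finset.univ.image Q, Icc (sInf (f '' A) - δ) (sSup (f '' A)) := by
    refine (Icc_subset_iUnion_Icc_sub_of_le_add hδ (t := fun i => f (c i)) hstep).trans <|
      iUnion_subset fun i => ?_
    refine (Icc_subset_Icc (by linarith [hInf i]) (hSup i)).trans <|
      subset_biUnion_of_mem (u := fun A => Icc (sInf (f '' A) - δ) (sSup (f '' A))) ?_
    exact Finset.mem_image_of_mem Q (Finset.mem_univ i)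
  rw [← ENNReal.ofReal_le_ofReal_iff (Finset.sum_nonneg hnonneg),
    ENNReal.ofReal_sum_of_nonneg hnonneg, ← Real.volume_Icc]
  calc volume (Icc (f (c 0)) (f (c (Fin.last n))))
      ≤ volume (⋃ A ∈ Finset.univ.image Q, Icc (sInf (f '' A) - δ) (sSup (f '' A))) :=
        measure_mono hcover
    _ ≤ ∑ A ∈ Finset.univ.image Q, volume (Icc (sInf (f '' A) - δ) (sSup (f '' A))) :=
        measure_biUnion_finset_le _ _
    _ = _ := Finset.sum_congr rfl fun A _ => by
        rw [Real.volume_Icc, sub_sub_eq_add_sub, add_sub_right_comm]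

theorem mul_le_sum_add_card_mul {ι : Type*} [DecidableEq ι] {s I : Finset ι} {ℓ w : ι → ℝ}
    {d δ r : ℝ} (hδ : 0 ≤ δ) (hδr : δ ≤ r) (hr : 0 < r) (hd : d ≤ ∑ i ∈ s, (ℓ i + δ))
    (hℓ : ∀ i ∈ s, 0 ≤ ℓ i) (hℓw : ∀ i ∈ s, ℓ i ≤ w i) (hw : ∀ i ∈ s, i ∉ I → r ≤ w i) :
    (1 - δ / r) * d ≤ ∑ i ∈ s, w i + I.card * δ := by
  have hk0 : 0 ≤ δ / r := div_nonneg hδ hr.le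
  have hk1 : δ / r ≤ 1 := (div_le_one hr).2 hδr
  have hterm : ∀ i ∈ s, (1 - δ / r) * (ℓ i + δ) ≤ w i + if i ∈ I then δ else 0 := by
    intro i hi
    split_ifs with hiI
    · nlinarith [hℓ i hi, hℓw i hi]
    -- `(1 - δ/r) ℓ + δ = (1 - δ/r) ℓ + (δ/r) r` is a convex combination of lower bounds of `w i`.
    · have : δ / r * r = δ := div_mul_cancel₀ δ hr.ne'
      nlinarith [hℓ i hi, hℓw i hi, hw i hi hiI]
  calc (1 - δ / r) * d ≤ (1 - δ / r) * ∑ i ∈ s, (ℓ i + δ) :=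
        mul_le_mul_of_nonneg_left hd (by linarith)
    _ = ∑ i ∈ s, (1 - δ / r) * (ℓ i + δ) := Finset.mul_sum _ _ _
    _ ≤ ∑ i ∈ s, (w i + if i ∈ I then δ else 0) := Finset.sum_le_sum hterm
    _ = ∑ i ∈ s, w i + (s ∩ I).card * δ := by
        rw [Finset.sum_add_distrib, Finset.sum_ite_mem, Finset.sum_const, nsmul_eq_mul]
    _ ≤ ∑ i ∈ s, w i + I.card * δ := by
        gcongr
        exact Finset.inter_subset_right

section Estimate

variable {X : Type*} [MetricSpace X] [MeasurableSpace X] [BorelSpace X]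

theorem connectedComponentIn_inter_eq_or_ofReal_le_hausdorffMeasure {K U : Set X}
    (hK : IsCompact K) (hU : IsClosed U) {t : X} (ht : t ∈ K ∩ U) {r : ℝ}
    (hr : ∀ y ∈ frontier U, r ≤ dist t y) :
    connectedComponentIn (K ∩ U) t = connectedComponentIn K t ∨
      ENNReal.ofReal r ≤ μH[1] (connectedComponentIn (K ∩ U) t) :=
  (hK.connectedComponentIn_inter_eq_or_inter_frontier_nonempty hU ht).imp_right
    fun ⟨q, hq, hqU⟩ => (ENNReal.ofReal_le_ofReal (hr q hqU)).trans <|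
      isPreconnected_connectedComponentIn.ofReal_dist_le_hausdorffMeasure_s9
        (mem_connectedComponentIn ht) hq

theorem mul_dist_le_hausdorffMeasure_add_card_mul {K U K' : Set X} (hK : IsCompact K)
    (hU : IsClosed U) {I : Finset (Set X)} (hI : ∀ x ∈ K, connectedComponentIn K x ∈ I)
    {δ r : ℝ} (hδ : 0 ≤ δ) (hδr : δ ≤ r) (hr : 0 < r) (hK' : K' ⊆ K ∩ U)
    (hdist : ∀ x ∈ K', ∀ y ∈ frontier U, r ≤ dist x y) (hμ : μH[1] (K ∩ U) ≠ ⊤)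
    {n : ℕ} {c : Fin (n + 1) → X} (hc : ∀ i, c i ∈ K')
    (hstep : ∀ i : Fin n, dist (c i.castSucc) (c i.succ) ≤ δ) :
    (1 - δ / r) * dist (c 0) (c (Fin.last n)) ≤ (μH[1] (K ∩ U)).toReal + I.card * δ := by
  classical
  have hT : IsCompact (K ∩ U) := hK.inter_right hU
  set Q : Fin (n + 1) → Set X := fun i => connectedComponentIn (K ∩ U) (c i)
  have hcQ i : c i ∈ Q i := mem_connectedComponentIn (hK' (hc i))
  have hf : LipschitzWith 1 (dist (c 0)) := LipschitzWith.dist_right (c 0)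
  have hQ i : Bornology.IsBounded (dist (c 0) '' Q i) :=
    hf.isBounded_image (hT.isBounded.subset (connectedComponentIn_subset _ _))
  have hfin : ∀ A ∈ Finset.univ.image Q, μH[1] A ≠ ⊤ := Finset.forall_mem_image.2 fun i _ =>
    ne_top_of_le_ne_top hμ (measure_mono (connectedComponentIn_subset _ _))
  have hcover := sub_le_sum_sSup_sub_sInf_add hδ (f := dist (c 0)) (Q := Q)
    (fun i => (dist_triangle _ _ _).trans (by linarith [hstep i])) hcQ hQ
  rw [dist_self, sub_zero] at hcover
  refine (mul_le_sum_add_card_mul (I := I) (w := fun A => (μH[1] A).toReal) hδ hδr hr hcover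
    ?_ ?_ ?_).trans ?_
  · exact Finset.forall_mem_image.2 fun i _ => sub_nonneg.2 <|
      (csInf_le (hQ i).bddBelow (mem_image_of_mem _ (hcQ i))).trans
        (le_csSup (hQ i).bddAbove (mem_image_of_mem _ (hcQ i)))
  · exact Finset.forall_mem_image.2 fun i hi => (ENNReal.ofReal_le_iff_le_toReal
      (hfin _ (Finset.mem_image_of_mem Q hi))).1 <|
        isPreconnected_connectedComponentIn.ofReal_sSup_sub_sInf_le_hausdorffMeasure hf (hQ i)
  · refine Finset.forall_mem_image.2 fun i hi hQI => ?_
    rcases connectedComponentIn_inter_eq_or_ofReal_le_hausdorffMeasure hK hU (hK' (hc i))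
      (hdist _ (hc i)) with hQK | hrQ
    · exact absurd (hI _ (hK' (hc i)).1) (hQK ▸ hQI)
    · exact (ENNReal.ofReal_le_iff_le_toReal (hfin _ (Finset.mem_image_of_mem Q hi))).1 hrQ
  · gcongr
    rw [← ENNReal.toReal_sum hfin]
    exact ENNReal.toReal_mono hμ (sum_measure_image_connectedComponentIn_le _ hT.isClosed _ c)

end Estimate

theorem stmt9_general {X : Type*} [MetricSpace X] [MeasurableSpace X] [BorelSpace X]
    (K : Set X) (hK : IsCompact K) (m : ℕ)
    (hcomp : ∃ I : Finset (Set X), I.card ≤ m ∧ ∀ x ∈ K, connectedComponentIn K x ∈ I)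
    (δ : ℝ) (hδ : 0 < δ) (K' : Set X) (hK' : K' ⊆ K) (hchain : DeltaConnected δ K')
    (U : Set X) (hU : IsClosed U) (hK'U : K' ⊆ U) (r : ℝ) (hr : 0 < r)
    (hdist : ∀ x ∈ K', ∀ y ∈ frontier U, r ≤ dist x y) :
    ENNReal.ofReal ((1 - δ / r) * Metric.diam K' - m * δ) ≤ μH[1] (K ∩ U) := by
  obtain ⟨I, hIcard, hI⟩ := hcomp
  rcases le_or_gt r δ with hrδ | hδr
  · have hk : 1 ≤ δ / r := (one_le_div hr).2 hrδ
    rw [ENNReal.ofReal_of_nonpos <| by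
      nlinarith [Metric.diam_nonneg (s := K'), m.cast_nonneg (α := ℝ)]]
    exact zero_le
  by_cases hμ : μH[1] (K ∩ U) = ⊤
  · simp [hμ]
  have hk : 0 < 1 - δ / r := sub_pos.2 ((div_lt_one hr).2 hδr)
  have hpair : ∀ x ∈ K', ∀ y ∈ K',
      dist x y ≤ ((μH[1] (K ∩ U)).toReal + m * δ) / (1 - δ / r) := by
    intro x hx y hy
    obtain ⟨n, c, hc, rfl, rfl, hstep⟩ := hchain x hx y hy
    rw [le_div_iff₀' hk]
    refine (mul_dist_le_hausdorffMeasure_add_card_mul hK hU hI hδ.le hδr.le hr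
      (subset_inter hK' hK'U) hdist hμ hc hstep).trans ?_
    gcongr
  have hdiam := Metric.diam_le_of_forall_dist_le (by positivity) hpair
  rw [le_div_iff₀' hk] at hdiam
  rw [← ENNReal.ofReal_toReal hμ]
  exact ENNReal.ofReal_le_ofReal (by linarith)

theorem stmt9 {X : Type*} [MetricSpace X] [MeasurableSpace X] [BorelSpace X]
    (K : Set X) (hK : IsCompact K) (m : ℕ) (hm : 0 < m)
    (hcomp : ∃ I : Finset (Set X), I.card ≤ m ∧ ∀ x ∈ K, connectedComponentIn K x ∈ I)
    (δ : ℝ) (hδ : 0 < δ) (K' : Set X) (hK' : K' ⊆ K) (hchain : DeltaConnected δ K')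
    (U : Set X) (hU : IsClosed U) (hK'U : K' ⊆ U) (r : ℝ) (hr : 0 < r)
    (hdist : ∀ x ∈ K', ∀ y ∈ frontier U, r ≤ dist x y) :
    ENNReal.ofReal ((1 - δ / r) * Metric.diam K' - m * δ) ≤ μH[1] (K ∩ U) :=
  stmt9_general K hK m hcomp δ hδ K' hK' hchain U hU hK'U r hr hdist
end

section
/- Let X be a metric space which is a continuum with H^1(X) < +∞, and let x ≠ x' be points of X. Then for every δ > 0 there exists a δ-chain in X connecting x and x' whose length Σ d(x_{i-1},x_i) is at most 4·H^1(X). -/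
open MeasureTheory ENNReal Metric

/-!
Take a `δ`-chain from `x` to `x'` with the fewest steps, `x = c 0, …, c n = x'`. Minimality
forbids shortcuts, so `c i` and `c j` are more than `δ` apart whenever `i + 2 ≤ j`. The balls of
radius `δ / 2` around the even-indexed points `c 0, c 2, …` are therefore disjoint, and by
connectedness each of them has `H¹`-measure at least `δ / 2`: the distance to its centre, a
`1`-Lipschitz function, maps it onto `[0, δ / 2)`. There are `⌊n / 2⌋ + 1` such balls, so
for `n ≥ 2` the length of the chain, at most `n δ`, is bounded by `4 H¹(X)`; for `n ≤ 1` it is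
`d(x, x') ≤ H¹(X)` by the same Lipschitz argument.
-/

def IsStepChain {α : Type*} (r : α → α → Prop) (n : ℕ) (c : ℕ → α) : Prop :=
  ∀ i < n, r (c i) (c (i + 1))

namespace IsStepChain

variable {α : Type*} {r : α → α → Prop}

theorem exists_of_reflTransGen {x y : α} (h : Relation.ReflTransGen r x y) :
    ∃ n c, c 0 = x ∧ c n = y ∧ IsStepChain r n c := by
  induction h with
  | refl => exact ⟨0, fun _ => x, rfl, rfl, fun i hi => absurd hi i.not_lt_zero⟩
  | @tail _ z _ hbz ih =>
    obtain ⟨n, c, h0, hn, hc⟩ := ih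
    refine ⟨n + 1, Function.update c (n + 1) z, ?_, by simp, fun i hi => ?_⟩
    · simpa [Function.update_of_ne (Nat.succ_ne_zero n).symm] using h0
    · rcases Nat.lt_succ_iff_lt_or_eq.mp hi with hi | rfl
      · simpa [Function.update_of_ne (by omega : i ≠ n + 1),
          Function.update_of_ne (by omega : i + 1 ≠ n + 1)] using hc i hi
      · simpa [hn] using hbz

theorem exists_shortcut {n : ℕ} {c : ℕ → α} (hc : IsStepChain r n c) {i k : ℕ}
    (hik : i + 1 + k ≤ n) (hr : r (c i) (c (i + 1 + k))) :
    ∃ c', c' 0 = c 0 ∧ c' (n - k) = c n ∧ IsStepChain r (n - k) c' := by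
  refine ⟨fun t => if t ≤ i then c t else c (t + k), by simp, ?_, fun t ht => ?_⟩
  · simp only [show ¬ n - k ≤ i by omega, if_false, Nat.sub_add_cancel (by omega : k ≤ n)]
  · rcases lt_trichotomy t i with hti | rfl | hti
    · simpa [hti.le, Nat.succ_le_of_lt hti] using hc t (by omega)
    · simpa [add_right_comm] using hr
    · simpa [show ¬ t ≤ i by omega, show ¬ t + 1 ≤ i by omega, add_right_comm]
        using hc (t + k) (by omega)

theorem exists_forall_not_rel {x y : α} (h : ∃ n c, c 0 = x ∧ c n = y ∧ IsStepChain r n c) :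
    ∃ n c, c 0 = x ∧ c n = y ∧ IsStepChain r n c ∧
      ∀ i j, i + 2 ≤ j → j ≤ n → ¬ r (c i) (c j) := by
  classical
  obtain ⟨c, h0, hn, hc⟩ := Nat.find_spec h
  refine ⟨Nat.find h, c, h0, hn, hc, fun i j hij hjn hr => ?_⟩
  obtain ⟨c', h0', hn', hc'⟩ := hc.exists_shortcut (i := i) (k := j - i - 1) (by omega)
    (by rwa [show i + 1 + (j - i - 1) = j by omega])
  exact Nat.find_min h (by omega : Nat.find h - (j - i - 1) < Nat.find h)
    ⟨c', h0'.trans h0, hn'.trans hn, hc'⟩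

end IsStepChain

theorem exists_isStepChain_dist_le {X : Type*} [PseudoMetricSpace X] [PreconnectedSpace X]
    {δ : ℝ} (hδ : 0 < δ) (x y : X) :
    ∃ n c, c 0 = x ∧ c n = y ∧ IsStepChain (fun a b => dist a b ≤ δ) n c := by
  refine IsStepChain.exists_of_reflTransGen
    (PreconnectedSpace.induction₂' _ (fun z => ?_) ⟨fun _ _ _ => .trans⟩ x y)
  filter_upwards [ball_mem_nhds z hδ] with w hw
  exact ⟨.single (dist_comm z w ▸ (mem_ball.mp hw).le), .single (mem_ball.mp hw).le⟩

theorem sum_measure_ball_le_measure_univ {X ι : Type*} [PseudoMetricSpace X]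
    [MeasurableSpace X] [OpensMeasurableSpace X] (μ : Measure X) (s : Finset ι) (p : ι → X)
    {r : ℝ} (hp : (s : Set ι).Pairwise fun i j => 2 * r ≤ dist (p i) (p j)) :
    ∑ i ∈ s, μ (ball (p i) r) ≤ μ Set.univ := by
  rw [← measure_biUnion_finset
    (fun i hi j hj hij => ball_disjoint_ball (by linarith [hp hi hj hij]))
    (fun _ _ => measurableSet_ball)]
  exact measure_mono (Set.subset_univ _)

theorem ofReal_le_hausdorffMeasure_ball {X : Type*} [MetricSpace X] [MeasurableSpace X]
    [BorelSpace X] [PreconnectedSpace X] {p y : X} {r : ℝ} (hr : r ≤ dist p y) :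
    ENNReal.ofReal r ≤ μH[1] (ball p r) := by
  have hlip : LipschitzWith 1 (dist p) := LipschitzWith.dist_right p
  have hIcc : Set.Icc 0 (dist p y) ⊆ dist p '' Set.univ :=
    (isPreconnected_univ.image _ hlip.continuous.continuousOn).Icc_subset
      ⟨p, trivial, dist_self p⟩ ⟨y, trivial, rfl⟩
  have hIco : Set.Ico 0 r ⊆ dist p '' ball p r := fun t ht => by
    obtain ⟨z, -, hz⟩ := hIcc ⟨ht.1, ht.2.le.trans hr⟩
    exact ⟨z, by rw [mem_ball, dist_comm, hz]; exact ht.2, hz⟩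
  calc ENNReal.ofReal r = μH[1] (Set.Ico (0 : ℝ) r) := by
        rw [hausdorffMeasure_real, Real.volume_Ico, sub_zero]
    _ ≤ μH[1] (dist p '' ball p r) := measure_mono hIco
    _ ≤ μH[1] (ball p r) := by simpa using hlip.hausdorffMeasure_image_le zero_le_one (ball p r)

theorem ofReal_dist_le_hausdorffMeasure_univ {X : Type*} [MetricSpace X] [MeasurableSpace X]
    [BorelSpace X] [PreconnectedSpace X] (p y : X) :
    ENNReal.ofReal (dist p y) ≤ μH[1] (Set.univ : Set X) :=
  (ofReal_le_hausdorffMeasure_ball le_rfl).trans (measure_mono (Set.subset_univ _))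

theorem ofReal_mul_le_four_mul_hausdorffMeasure_univ_of_separated {X : Type*}
    [MetricSpace X] [MeasurableSpace X] [BorelSpace X] [PreconnectedSpace X] {n : ℕ}
    (hn : 2 ≤ n) {c : ℕ → X} {δ : ℝ}
    (hsep : ∀ i j, i + 2 ≤ j → j ≤ n → δ < dist (c i) (c j)) :
    ENNReal.ofReal (n * δ) ≤ 4 * μH[1] (Set.univ : Set X) := by
  set m := n / 2 + 1
  have hsep' : ∀ k k', k < k' → k' < m → δ < dist (c (2 * k)) (c (2 * k')) :=
    fun k k' hkk' hk' => hsep _ _ (by omega) (by omega)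
  have hball : ∀ k ∈ Finset.range m,
      ENNReal.ofReal (δ / 2) ≤ μH[1] (ball (c (2 * k)) (δ / 2)) := by
    intro k hk
    refine ofReal_le_hausdorffMeasure_ball (y := if k = 0 then c n else c 0) ?_
    split_ifs with hk0
    · subst hk0
      linarith [hsep 0 n (by omega) le_rfl, dist_nonneg (x := c 0) (y := c n)]
    · linarith [dist_comm (c 0) (c (2 * k)), dist_nonneg (x := c 0) (y := c (2 * k)),
        hsep 0 (2 * k) (by omega) (by simp only [Finset.mem_range] at hk; omega)]
  have hpack : ∑ k ∈ Finset.range m, μH[1] (ball (c (2 * k)) (δ / 2)) ≤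
      μH[1] (Set.univ : Set X) := by
    refine sum_measure_ball_le_measure_univ _ _ (fun k => c (2 * k)) fun k hk k' hk' hkk' => ?_
    simp only [Finset.coe_range, Set.mem_Iio] at hk hk'
    rcases hkk'.lt_or_gt with h | h
    · linarith [hsep' k k' h hk']
    · linarith [hsep' k' k h hk, dist_comm (c (2 * k)) (c (2 * k'))]
  calc ENNReal.ofReal (n * δ) = n * ENNReal.ofReal δ := by
        rw [ENNReal.ofReal_mul (Nat.cast_nonneg n), ENNReal.ofReal_natCast]
    _ ≤ (2 * m : ℕ) * ENNReal.ofReal δ := by gcongr; omega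
    _ = 4 * ∑ _k ∈ Finset.range m, ENNReal.ofReal (δ / 2) := by
        have hhalf : ENNReal.ofReal δ = 2 * ENNReal.ofReal (δ / 2) := by
          rw [← ENNReal.ofReal_ofNat 2, ← ENNReal.ofReal_mul zero_le_two]
          ring_nf
        rw [hhalf, Finset.sum_const, Finset.card_range, nsmul_eq_mul]
        push_cast
        ring
    _ ≤ 4 * μH[1] Set.univ := by gcongr; exact (Finset.sum_le_sum hball).trans hpack


theorem stmt11_general {X : Type*} [MetricSpace X] [MeasurableSpace X] [BorelSpace X]
    [ConnectedSpace X]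
    (x x' : X) (δ : ℝ) (hδ : 0 < δ) :
    ∃ (n : ℕ) (c : Fin (n + 1) → X), c 0 = x ∧ c (Fin.last n) = x' ∧
      (∀ i : Fin n, dist (c i.castSucc) (c i.succ) ≤ δ) ∧
      ENNReal.ofReal (∑ i : Fin n, dist (c i.castSucc) (c i.succ)) ≤
        4 * μH[1] (Set.univ : Set X) := by
  obtain ⟨n, c, h0, hn, hchain, hsep⟩ :=
    IsStepChain.exists_forall_not_rel (exists_isStepChain_dist_le hδ x x')
  refine ⟨n, fun i => c i, h0, hn, fun i => hchain i i.2, ?_⟩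
  simp only [Fin.val_castSucc, Fin.val_succ]
  rw [Fin.sum_univ_eq_sum_range (fun i => dist (c i) (c (i + 1)))]
  rcases le_or_gt n 1 with hn1 | hn2
  · have hlen : ∑ i ∈ Finset.range n, dist (c i) (c (i + 1)) = dist x x' := by
      interval_cases n <;> simp [← h0, ← hn]
    calc ENNReal.ofReal (∑ i ∈ Finset.range n, dist (c i) (c (i + 1)))
        = ENNReal.ofReal (dist x x') := by rw [hlen]
      _ ≤ μH[1] Set.univ := ofReal_dist_le_hausdorffMeasure_univ x x'
      _ ≤ 4 * μH[1] Set.univ := le_mul_of_one_le_left zero_le (by norm_num)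
  · calc ENNReal.ofReal (∑ i ∈ Finset.range n, dist (c i) (c (i + 1)))
        ≤ ENNReal.ofReal (n * δ) := by
          gcongr
          simpa using Finset.sum_le_card_nsmul _ _ _
            fun i hi => hchain i (Finset.mem_range.mp hi)
      _ ≤ 4 * μH[1] Set.univ :=
          ofReal_mul_le_four_mul_hausdorffMeasure_univ_of_separated hn2
            fun i j hij hjn => not_le.mp (hsep i j hij hjn)

theorem stmt11 {X : Type*} [MetricSpace X] [MeasurableSpace X] [BorelSpace X]
    [CompactSpace X] [ConnectedSpace X]
    (hfin : μH[1] (Set.univ : Set X) < ⊤)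
    (x x' : X) (hxx : x ≠ x') (δ : ℝ) (hδ : 0 < δ) :
    ∃ (n : ℕ) (c : Fin (n + 1) → X), c 0 = x ∧ c (Fin.last n) = x' ∧
      (∀ i : Fin n, dist (c i.castSucc) (c i.succ) ≤ δ) ∧
      ENNReal.ofReal (∑ i : Fin n, dist (c i.castSucc) (c i.succ)) ≤
        4 * μH[1] (Set.univ : Set X) :=
  stmt11_general x x' δ hδ
end

section
/- If γ : I → X is an injective continuous path defined on a closed interval, then length(γ) = H^1(γ(I)). -/
/-! `μH[1] (γ '' I) ≤ length γ` holds for every path: reparametrized by arc length, `γ` becomes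
`1`-Lipschitz on a parameter set of diameter at most its length. Conversely, for a partition
`t₀ ≤ ⋯ ≤ tₙ` of `I`, each `d(γ tᵢ, γ tᵢ₊₁)` is at most `μH[1]` of the connected arc
`γ '' [tᵢ, tᵢ₊₁]`, as the distance to `γ tᵢ` maps this arc onto `[0, d(γ tᵢ, γ tᵢ₊₁)]` without
increasing `μH[1]`. By injectivity these arcs meet in at most one point, a `μH[1]`-null set, so
their measures add up to at most `μH[1] (γ '' I)`. -/

open MeasureTheory ENNReal Set

theorem Set.subsingleton_Icc_inter_Icc_of_le {α : Type*} [PartialOrder α] {a b c d : α}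
    (hbc : b ≤ c) : (Icc a b ∩ Icc c d).Subsingleton := by
  rintro x ⟨⟨-, hxb⟩, ⟨hcx, -⟩⟩ y ⟨⟨-, hyb⟩, ⟨hcy, -⟩⟩
  exact (le_antisymm hxb (hbc.trans hcx)).trans (le_antisymm hyb (hbc.trans hcy)).symm

theorem HasUnitSpeedOn.lipschitzOnWith {E : Type*} [PseudoEMetricSpace E] {f : ℝ → E}
    {s : Set ℝ} (hf : HasUnitSpeedOn f s) : LipschitzOnWith 1 f s := by
  suffices ∀ ⦃x⦄, x ∈ s → ∀ ⦃y⦄, y ∈ s → x ≤ y → edist (f x) (f y) ≤ edist x y by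
    intro x hx y hy
    rcases le_total x y with hxy | hyx
    · simpa using this hx hy hxy
    · simpa [edist_comm] using this hy hx hyx
  intro x hx y hy hxy
  calc edist (f x) (f y) ≤ eVariationOn f (s ∩ Icc x y) :=
        eVariationOn.edist_le f ⟨hx, le_rfl, hxy⟩ ⟨hy, hxy, le_rfl⟩
    _ = edist x y := by
        rw [hf hx hy, NNReal.coe_one, one_mul, edist_comm, edist_dist, Real.dist_eq,
          abs_of_nonneg (sub_nonneg.2 hxy)]

section HausdorffMeasure

variable {X : Type*} [EMetricSpace X] [MeasurableSpace X] [BorelSpace X]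

theorem Set.Subsingleton.hausdorffMeasure_eq_zero {s : Set X} (hs : s.Subsingleton) {d : ℝ}
    (hd : 0 < d) : μH[d] s = 0 := by
  simpa [hd.le] using
    hausdorffMeasure_of_dimH_lt (d := d.toNNReal) (by simpa [dimH_subsingleton hs])

theorem hausdorffMeasure_image_le_eVariationOn (f : ℝ → X) (s : Set ℝ) :
    μH[1] (f '' s) ≤ eVariationOn f s := by
  rcases eq_or_ne (eVariationOn f s) ⊤ with htop | hbv
  · simp [htop]
  rcases s.eq_empty_or_nonempty with rfl | ⟨a, ha⟩
  · simp
  have hlbv : LocallyBoundedVariationOn f s :=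
    BoundedVariationOn.locallyBoundedVariationOn hbv
  set φ := variationOnFromTo f s a
  set g := naturalParameterization f s a
  have hfg : f '' s = g '' (φ '' s) := by
    rw [← image_comp]
    exact image_congr fun x hx ↦
      (edist_eq_zero.1 (edist_naturalParameterization_eq_zero hlbv ha hx)).symm
  have hdiam : Metric.ediam (φ '' s) ≤ eVariationOn f s := by
    refine Metric.ediam_le ?_
    rintro _ ⟨x, hx, rfl⟩ _ ⟨y, hy, rfl⟩
    rw [edist_dist, Real.dist_eq, variationOnFromTo.sub_right hlbv ha hx hy,
      ← ENNReal.ofReal_toReal hbv]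
    exact ENNReal.ofReal_le_ofReal (variationOnFromTo.abs_le_eVariationOn hbv)
  calc μH[1] (f '' s) = μH[1] (g '' (φ '' s)) := by rw [hfg]
    _ ≤ μH[1] (φ '' s) := by
        simpa using ((has_unit_speed_naturalParameterization f hlbv ha).lipschitzOnWith
          ).hausdorffMeasure_image_le (d := 1) zero_le_one
    _ = volume (φ '' s) := by rw [hausdorffMeasure_real]
    _ ≤ eVariationOn f s := (Real.volume_le_diam _).trans hdiam

end HausdorffMeasure

section MetricSpace

variable {X : Type*} [MetricSpace X] [MeasurableSpace X] [BorelSpace X]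

theorem IsPreconnected.edist_le_hausdorffMeasure {s : Set X} (hs : IsPreconnected s)
    {x y : X} (hx : x ∈ s) (hy : y ∈ s) : edist x y ≤ μH[1] s := by
  have hlip : LipschitzWith 1 (dist x) := LipschitzWith.dist_right x
  have hsub : Icc 0 (dist x y) ⊆ dist x '' s :=
    (hs.image _ hlip.continuous.continuousOn).ordConnected.out ⟨x, hx, dist_self x⟩ ⟨y, hy, rfl⟩
  calc edist x y = volume (Icc 0 (dist x y)) := by rw [Real.volume_Icc, sub_zero, edist_dist]
    _ ≤ volume (dist x '' s) := measure_mono hsub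
    _ = μH[1] (dist x '' s) := by rw [hausdorffMeasure_real]
    _ ≤ μH[1] s := by simpa using hlip.hausdorffMeasure_image_le zero_le_one s

theorem sum_edist_le_hausdorffMeasure_image {γ : ℝ → X} {s : Set ℝ} (hs : s.OrdConnected)
    (hγ : ContinuousOn γ s) (hinj : InjOn γ s) {u : ℕ → ℝ} (hu : Monotone u)
    (us : ∀ i, u i ∈ s) (n : ℕ) :
    ∑ i ∈ Finset.range n, edist (γ (u (i + 1))) (γ (u i)) ≤ μH[1] (γ '' s) := by
  set piece : ℕ → Set ℝ := fun i ↦ Icc (u i) (u (i + 1))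
  have piece_sub (i : ℕ) : piece i ⊆ s := hs.out (us i) (us (i + 1))
  have hdisj : Pairwise (Function.onFun (AEDisjoint μH[1]) fun i ↦ γ '' piece i) := by
    refine (Std.Symm.pairwise_on _).2 fun i j hij ↦ ?_
    have hmeet : (γ '' piece i ∩ γ '' piece j).Subsingleton := by
      rw [← hinj.image_inter (piece_sub i) (piece_sub j)]
      exact (subsingleton_Icc_inter_Icc_of_le (hu hij)).image γ
    exact hmeet.hausdorffMeasure_eq_zero one_pos
  have hmeas (i : ℕ) : NullMeasurableSet (γ '' piece i) μH[1] :=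
    (isCompact_Icc.image_of_continuousOn (hγ.mono (piece_sub i))).isClosed
      |>.measurableSet.nullMeasurableSet
  calc ∑ i ∈ Finset.range n, edist (γ (u (i + 1))) (γ (u i))
      ≤ ∑ i ∈ Finset.range n, μH[1] (γ '' piece i) := by
        refine Finset.sum_le_sum fun i _ ↦ ?_
        have hi : u i ≤ u (i + 1) := hu i.le_succ
        exact (isPreconnected_Icc.image γ (hγ.mono (piece_sub i))).edist_le_hausdorffMeasure
          ⟨_, ⟨hi, le_rfl⟩, rfl⟩ ⟨_, ⟨le_rfl, hi⟩, rfl⟩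
    _ = μH[1] (⋃ i ∈ Finset.range n, γ '' piece i) :=
        (measure_biUnion_finset₀ (hdisj.set_pairwise _) fun i _ ↦ hmeas i).symm
    _ ≤ μH[1] (γ '' s) :=
        measure_mono (iUnion₂_subset fun i _ ↦ image_mono (piece_sub i))

theorem eVariationOn_le_hausdorffMeasure_image {γ : ℝ → X} {s : Set ℝ} (hs : s.OrdConnected)
    (hγ : ContinuousOn γ s) (hinj : InjOn γ s) :
    eVariationOn γ s ≤ μH[1] (γ '' s) :=
  iSup_le fun ⟨n, _, hu, us⟩ ↦ sum_edist_le_hausdorffMeasure_image hs hγ hinj hu us n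

end MetricSpace

theorem stmt13_general {X : Type*} [MetricSpace X] [MeasurableSpace X] [BorelSpace X]
    (a b : ℝ) (γ : ℝ → X) (hγ : ContinuousOn γ (Icc a b))
    (hinj : InjOn γ (Icc a b)) :
    eVariationOn γ (Icc a b) = μH[1] (γ '' Icc a b) :=
  (eVariationOn_le_hausdorffMeasure_image ordConnected_Icc hγ hinj).antisymm
    (hausdorffMeasure_image_le_eVariationOn γ _)

theorem stmt13 {X : Type*} [MetricSpace X] [MeasurableSpace X] [BorelSpace X]
    (a b : ℝ) (hab : a ≤ b) (γ : ℝ → X) (hγ : ContinuousOn γ (Icc a b))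
    (hinj : InjOn γ (Icc a b)) :
    eVariationOn γ (Icc a b) = μH[1] (γ '' Icc a b) :=
  stmt13_general a b γ hγ hinj
end
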